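/- Every finite nonempty set of terms has a most specific generalisation: there exists a term $M$ such that every term in the set is an instance of $M$, and any other term $M'$ of which every term in the set is an instance is itself more general than $M$. -/

import Mathlib

/-- First-order terms over a signature `F` indexed by arity, with variables. -/
inductive Tm (F : ℕ → Type) : Type
  | var : ℕ → Tm F
  | app : (n : ℕ) → F n → (Fin n → Tm F) → Tm F

/-- Application of a substitution (a map from variables to terms) to a term. -/
def subst {F : ℕ → Type} (σ : ℕ → Tm F) : Tm F → Tm F
  | .var x => σ x
  | .app n f ts => .app n f (fun i => subst σ (ts i))

/-- `s` is more general than `t` iff `t` is an instance of `s`, i.e. `s θ = t`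
for some substitution `θ`. -/
def MoreGeneral {F : ℕ → Type} (s t : Tm F) : Prop := ∃ σ, subst σ s = t

/-! Plotkin's anti-unification. Two terms are generalised by descending through their common
function symbols and replacing every disagreement pair `(s', t')` by a variable `π s' t'`.
Every common generalisation `u` with `uσ = s`, `uτ = t` is mapped onto this term by
`x ↦ antiUnify π (σ x) (τ x)`, whatever `π` is; and if `π` is injective on pairs of subterms,
decoding variables back into the two components of their pair recovers `s` and `t`. Folding
this binary most specific generalisation over a finite set gives the general case. -/

variable {F : ℕ → Type}

namespace Tm

theorem subst_var (t : Tm F) : subst var t = t := by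
  induction t with
  | var x => rfl
  | app n f ts ih => simp only [subst, ih]

theorem subst_subst (σ τ : ℕ → Tm F) (t : Tm F) :
    subst σ (subst τ t) = subst (fun x => subst σ (τ x)) t := by
  induction t with
  | var x => rfl
  | app n f ts ih => simp only [subst, ih]

def subterms : Tm F → List (Tm F)
  | .var x => [.var x]
  | .app n f ts => .app n f ts :: (List.finRange n).flatMap fun i => (ts i).subterms

theorem mem_subterms_self (t : Tm F) : t ∈ t.subterms := by
  cases t <;> simp [subterms]

theorem subterms_subset_app {n : ℕ} (f : F n) (ts : Fin n → Tm F) (i : Fin n) :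
    (ts i).subterms ⊆ (app n f ts).subterms := fun _ h =>
  List.mem_cons_of_mem _ (List.mem_flatMap.2 ⟨i, List.mem_finRange i, h⟩)

open Classical in
noncomputable def antiUnify (π : Tm F → Tm F → ℕ) : Tm F → Tm F → Tm F
  | .app n f ss, .app m g ts =>
    if h : m = n then
      if h ▸ g = f then .app n f fun i => antiUnify π (ss i) (ts (i.cast h.symm))
      else .var (π (.app n f ss) (.app m g ts))
    else .var (π (.app n f ss) (.app m g ts))
  | s, t => .var (π s t)

section antiUnify

variable (π : Tm F → Tm F → ℕ)

theorem antiUnify_var_left (x : ℕ) (t : Tm F) : antiUnify π (var x) t = var (π (var x) t) := by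
  cases t <;> rfl

theorem antiUnify_var_right (s : Tm F) (y : ℕ) : antiUnify π s (var y) = var (π s (var y)) := by
  cases s <;> rfl

theorem antiUnify_app_self {n : ℕ} (f : F n) (ss ts : Fin n → Tm F) :
    antiUnify π (app n f ss) (app n f ts) = app n f fun i => antiUnify π (ss i) (ts i) := by
  simp [antiUnify]

theorem antiUnify_app_of_ne {n m : ℕ} {f : F n} {g : F m} (h : (⟨n, f⟩ : Σ k, F k) ≠ ⟨m, g⟩)
    (ss : Fin n → Tm F) (ts : Fin m → Tm F) :
    antiUnify π (app n f ss) (app m g ts) = var (π (app n f ss) (app m g ts)) := by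
  rw [antiUnify]
  split_ifs with hm hg
  · subst hm hg
    exact absurd rfl h
  all_goals rfl

theorem antiUnify_subst_subst (σ τ : ℕ → Tm F) (u : Tm F) :
    antiUnify π (subst σ u) (subst τ u) = subst (fun x => antiUnify π (σ x) (τ x)) u := by
  induction u with
  | var x => rfl
  | app n f ts ih => simp only [subst, antiUnify_app_self, ih]

theorem subst_antiUnify {ρ : ℕ → Tm F × Tm F} {s : Tm F} : ∀ {t : Tm F},
    (∀ s' ∈ s.subterms, ∀ t' ∈ t.subterms, ρ (π s' t') = (s', t')) →
    subst (fun x => (ρ x).1) (antiUnify π s t) = s ∧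
      subst (fun x => (ρ x).2) (antiUnify π s t) = t := by
  have of_var : ∀ {s t : Tm F}, antiUnify π s t = var (π s t) → ρ (π s t) = (s, t) →
      subst (fun x => (ρ x).1) (antiUnify π s t) = s ∧
        subst (fun x => (ρ x).2) (antiUnify π s t) = t := by
    intro s t h hρ
    simp [h, subst, hρ]
  induction s with
  | var x =>
    intro t hρ
    exact of_var (antiUnify_var_left π x t) (hρ _ (mem_subterms_self _) _ (mem_subterms_self _))
  | app n f ss ih =>
    intro t hρ
    have hρ' := hρ _ (mem_subterms_self _) _ (mem_subterms_self t)
    cases t with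
    | var y => exact of_var (antiUnify_var_right π _ y) hρ'
    | app m g ts =>
      by_cases h : (⟨n, f⟩ : Σ k, F k) = ⟨m, g⟩
      · obtain ⟨rfl, rfl⟩ := Sigma.mk.inj_iff.1 h
        have hchild i := ih i fun s' hs' t' ht' =>
          hρ s' (subterms_subset_app f ss i hs') t' (subterms_subset_app f ts i ht')
        simp only [antiUnify_app_self, subst, hchild, and_self]
      · exact of_var (antiUnify_app_of_ne π h ss ts) hρ'

end antiUnify

end Tm

namespace MoreGeneral

theorem refl (s : Tm F) : MoreGeneral s s := ⟨Tm.var, s.subst_var⟩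

theorem trans {s t u : Tm F} : MoreGeneral s t → MoreGeneral t u → MoreGeneral s u := by
  rintro ⟨σ, rfl⟩ ⟨τ, rfl⟩
  exact ⟨_, (Tm.subst_subst τ σ s).symm⟩

theorem antiUnify (π : Tm F → Tm F → ℕ) {s t u : Tm F} :
    MoreGeneral u s → MoreGeneral u t → MoreGeneral u (Tm.antiUnify π s t) := by
  rintro ⟨σ, rfl⟩ ⟨τ, rfl⟩
  exact ⟨_, (Tm.antiUnify_subst_subst π σ τ u).symm⟩

end MoreGeneral

def IsMsg (E : Set (Tm F)) (M : Tm F) : Prop :=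
  (∀ t ∈ E, MoreGeneral M t) ∧ ∀ M', (∀ t ∈ E, MoreGeneral M' t) → MoreGeneral M' M

theorem isMsg_singleton (s : Tm F) : IsMsg {s} s := by
  simpa [IsMsg] using MoreGeneral.refl s

theorem exists_isMsg_pair (s t : Tm F) : ∃ M, IsMsg {s, t} M := by
  classical
  let pairs := s.subterms ×ˢ t.subterms
  let π u v := pairs.idxOf (u, v)
  have hdecode : ∀ s' ∈ s.subterms, ∀ t' ∈ t.subterms, pairs.getD (π s' t') (s, t) = (s', t') := by
    intro s' hs' t' ht'
    have hmem : (s', t') ∈ pairs := List.pair_mem_product.2 ⟨hs', ht'⟩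
    rw [List.getD_eq_getElem?_getD, List.getElem?_idxOf hmem, Option.getD_some]
  obtain ⟨hs, ht⟩ := Tm.subst_antiUnify π (ρ := fun x => pairs.getD x (s, t)) hdecode
  refine ⟨Tm.antiUnify π s t, ?_, fun M' hM' => ?_⟩
  · simpa using ⟨⟨_, hs⟩, ⟨_, ht⟩⟩
  · simp only [Set.mem_insert_iff, Set.mem_singleton_iff, forall_eq_or_imp, forall_eq] at hM'
    exact hM'.1.antiUnify π hM'.2

theorem IsMsg.insert {E : Set (Tm F)} {s M N : Tm F} (hM : IsMsg E M) (hN : IsMsg {s, M} N) :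
    IsMsg (insert s E) N := by
  simp only [IsMsg, Set.mem_insert_iff, Set.mem_singleton_iff, forall_eq_or_imp, forall_eq]
    at hM hN ⊢
  refine ⟨⟨hN.1.1, fun t ht => hN.1.2.trans (hM.1 t ht)⟩, fun M' hM' => ?_⟩
  exact hN.2 M' ⟨hM'.1, hM.2 M' hM'.2⟩

/-- every finite nonempty set of terms has a most specific
generalisation: a term `M` of which every term in the set is an instance, and
such that every other term `M'` of which all terms of the set are instances is
more general than `M`. -/
theorem msg_exists {F : ℕ → Type} (E : Finset (Tm F)) (hE : E.Nonempty) :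
    ∃ M : Tm F, (∀ t ∈ E, MoreGeneral M t) ∧
      ∀ M' : Tm F, (∀ t ∈ E, MoreGeneral M' t) → MoreGeneral M' M := by
  suffices ∃ M, IsMsg (E : Set (Tm F)) M from this
  induction hE using Finset.Nonempty.cons_induction with
  | singleton s => exact ⟨s, by simpa using isMsg_singleton s⟩
  | cons s E _ _ ih =>
    obtain ⟨M, hM⟩ := ih
    obtain ⟨N, hN⟩ := exists_isMsg_pair s M
    exact ⟨N, by simpa using hM.insert hN⟩
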